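/- arXiv:1706.08233 — 2 statements merged into one kernel-verified Lean document; each statement's English description precedes it below -/
import Mathlib

section
/- Let A_1, ..., A_n be events on a probability space with P(A_i) > 0 for each i, and let q_1, ..., q_n be positive reals with ∑_{j=1}^n q_j = 1. Then P(⋃_{j=1}^n A_j) ≥ 1 / (∑_{i=1}^n ∑_{j=1}^n q_i q_j · P(A_i ∩ A_j)/(P(A_i) P(A_j))). -/
/-!
The random variable `X = ∑ i, (q i / P(A i)) • 𝟙_{A i}` has mean `∑ q i = 1`, second moment equal
to the double sum `S`, and vanishes off `⋃ A i`. Cauchy–Schwarz applied to `X` and the indicator of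
the union gives `1 = (E X)² ≤ P(⋃ A i) · E X² = P(⋃ A i) · S`.
-/

open MeasureTheory

theorem sum_indicator_const_sq {Ω ι : Type*} [Fintype ι] {A : ι → Set Ω} (c : ι → ℝ) (ω : Ω) :
    (∑ i, (A i).indicator (fun _ => c i) ω) ^ 2
      = ∑ p : ι × ι, (A p.1 ∩ A p.2).indicator (fun _ => c p.1 * c p.2) ω := by
  rw [sq, Finset.sum_mul_sum, ← Finset.univ_product_univ, Finset.sum_product]
  refine Finset.sum_congr rfl fun i _ => Finset.sum_congr rfl fun j _ => ?_
  by_cases hi : ω ∈ A i <;> by_cases hj : ω ∈ A j <;> simp [hi, hj]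

section
variable {Ω : Type*} [MeasurableSpace Ω] {μ : Measure Ω}

theorem sq_integral_mul_le_integral_sq_mul_integral_sq {f g : Ω → ℝ} (hf : MemLp f 2 μ)
    (hg : MemLp g 2 μ) :
    (∫ ω, f ω * g ω ∂μ) ^ 2 ≤ (∫ ω, f ω ^ 2 ∂μ) * ∫ ω, g ω ^ 2 ∂μ := by
  have hfg : Integrable (fun ω => f ω * g ω) μ := hf.integrable_mul hg
  have hquad : ∀ t : ℝ, 0 ≤ (∫ ω, g ω ^ 2 ∂μ) * (t * t) + (-2 * ∫ ω, f ω * g ω ∂μ) * t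
      + ∫ ω, f ω ^ 2 ∂μ := by
    intro t
    have hexpand : ∫ ω, (f ω - t * g ω) ^ 2 ∂μ = ∫ ω, f ω ^ 2 ∂μ
        - 2 * t * ∫ ω, f ω * g ω ∂μ + t ^ 2 * ∫ ω, g ω ^ 2 ∂μ := by
      have hpt : (fun ω => (f ω - t * g ω) ^ 2)
          = fun ω => f ω ^ 2 - 2 * t * (f ω * g ω) + t ^ 2 * g ω ^ 2 := by
        ext ω; ring
      rw [hpt, integral_add (f := fun ω => f ω ^ 2 - 2 * t * (f ω * g ω))
          (hf.integrable_sq.sub (hfg.const_mul _)) (hg.integrable_sq.const_mul _),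
        integral_sub hf.integrable_sq (hfg.const_mul _),
        integral_const_mul, integral_const_mul]
    have hnonneg : 0 ≤ ∫ ω, (f ω - t * g ω) ^ 2 ∂μ := integral_nonneg fun ω => sq_nonneg _
    linarith
  have hdiscrim := discrim_le_zero hquad
  rw [discrim] at hdiscrim
  linarith

theorem sq_integral_le_measureReal_mul_integral_sq [IsFiniteMeasure μ] {f : Ω → ℝ} {s : Set Ω}
    (hs : MeasurableSet s) (hf : MemLp f 2 μ) (hfs : Function.support f ⊆ s) :
    (∫ ω, f ω ∂μ) ^ 2 ≤ μ.real s * ∫ ω, f ω ^ 2 ∂μ := by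
  have hf_mul : ∀ ω, f ω * s.indicator 1 ω = f ω := by
    intro ω
    by_cases hω : ω ∈ s
    · simp [hω]
    · simp [hω, Function.notMem_support.1 fun h => hω (hfs h)]
  have hind_sq : ∀ ω, s.indicator (1 : Ω → ℝ) ω ^ 2 = s.indicator 1 ω := by
    intro ω
    by_cases hω : ω ∈ s <;> simp [hω]
  have hCS := sq_integral_mul_le_integral_sq_mul_integral_sq (g := s.indicator 1) hf
    (memLp_indicator_const 2 hs (1 : ℝ) (Or.inr (measure_ne_top μ s)))
  simp only [hf_mul, hind_sq, integral_indicator_one hs] at hCS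
  linarith

variable {ι : Type*} [Fintype ι] {A : ι → Set Ω}

theorem integral_sum_indicator_const [IsFiniteMeasure μ] (hA : ∀ i, MeasurableSet (A i))
    (c : ι → ℝ) :
    ∫ ω, ∑ i, (A i).indicator (fun _ => c i) ω ∂μ = ∑ i, μ.real (A i) * c i := by
  rw [integral_finsetSum _ fun i _ => (integrable_const (c i)).indicator (hA i)]
  simp [hA]

theorem integral_sum_indicator_const_sq [IsFiniteMeasure μ] (hA : ∀ i, MeasurableSet (A i))
    (c : ι → ℝ) :
    ∫ ω, (∑ i, (A i).indicator (fun _ => c i) ω) ^ 2 ∂μ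
      = ∑ i, ∑ j, μ.real (A i ∩ A j) * (c i * c j) := by
  simp_rw [sum_indicator_const_sq]
  rw [integral_sum_indicator_const (A := fun p : ι × ι => A p.1 ∩ A p.2)
    (fun p => (hA p.1).inter (hA p.2)), Fintype.sum_prod_type]

end

theorem stmt5_general {Ω : Type*} [MeasurableSpace Ω] (μ : Measure Ω) [IsProbabilityMeasure μ]
    (n : ℕ) (A : Fin n → Set Ω) (hAmeas : ∀ i, MeasurableSet (A i))
    (hApos : ∀ i, 0 < (μ (A i)).toReal)
    (q : Fin n → ℝ) (hqsum : ∑ i, q i = 1) :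
    1 / (∑ i, ∑ j, q i * q j * (μ (A i ∩ A j)).toReal /
        ((μ (A i)).toReal * (μ (A j)).toReal)) ≤ (μ (⋃ j, A j)).toReal := by
  simp_rw [← measureReal_def] at hApos ⊢
  set c : Fin n → ℝ := fun i => q i / μ.real (A i)
  set X : Ω → ℝ := fun ω => ∑ i, (A i).indicator (fun _ => c i) ω
  have hX_integral : ∫ ω, X ω ∂μ = 1 := by
    rw [integral_sum_indicator_const hAmeas, ← hqsum]
    exact Finset.sum_congr rfl fun i _ => mul_div_cancel₀ _ (hApos i).ne'
  have hX_sq_integral : ∫ ω, X ω ^ 2 ∂μ = ∑ i, ∑ j, q i * q j * μ.real (A i ∩ A j) /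
      (μ.real (A i) * μ.real (A j)) := by
    rw [integral_sum_indicator_const_sq hAmeas]
    refine Finset.sum_congr rfl fun i _ => Finset.sum_congr rfl fun j _ => ?_
    simp only [c]
    ring
  have hX_memLp : MemLp X 2 μ := memLp_finsetSum _ fun i _ =>
    memLp_indicator_const 2 (hAmeas i) (c i) (Or.inr (measure_ne_top μ _))
  have hX_support : Function.support X ⊆ ⋃ j, A j := by
    intro ω hω
    obtain ⟨i, -, hi⟩ := Finset.exists_ne_zero_of_sum_ne_zero hω
    exact Set.mem_iUnion.2 ⟨i, Set.mem_of_indicator_ne_zero hi⟩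
  have hCS := sq_integral_le_measureReal_mul_integral_sq (MeasurableSet.iUnion hAmeas)
    hX_memLp hX_support
  rw [hX_integral, hX_sq_integral, one_pow] at hCS
  have hS_pos := pos_of_mul_pos_right (one_pos.trans_le hCS) measureReal_nonneg
  rw [div_le_iff₀ hS_pos]
  linarith

/-- Weighted second moment lower bound for the probability of a union
(Lemma 3.3 of Xue 2017b). -/
theorem stmt5 {Ω : Type*} [MeasurableSpace Ω] (μ : Measure Ω) [IsProbabilityMeasure μ]
    (n : ℕ) (hn : 1 ≤ n) (A : Fin n → Set Ω) (hAmeas : ∀ i, MeasurableSet (A i))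
    (hApos : ∀ i, 0 < (μ (A i)).toReal)
    (q : Fin n → ℝ) (hq : ∀ i, 0 < q i) (hqsum : ∑ i, q i = 1) :
    1 / (∑ i, ∑ j, q i * q j * (μ (A i ∩ A j)).toReal /
        ((μ (A i)).toReal * (μ (A j)).toReal)) ≤ (μ (⋃ j, A j)).toReal :=
  stmt5_general μ n A hAmeas hApos q hqsum
end

section
/- Let ρ be a random variable with values in [0, Θ], Θ > 0 finite, E[ρ] > 0, and let λ, t, s > 0. Then lim_{d→∞} ⌊d^{1/3}⌋ · ((1 - (1 - e^{-s·(log d)/d^{1/3}}) · E[1 - e^{-λρt/(2d)}])^{⌊d/log d⌋} - 1) = -(s·λ·t·E[ρ])/2. -/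
/-!
Write `x_d = (1 - e^{-s log d / d^{1/3}}) E[1 - e^{-λρt/(2d)}]`, `n_d = ⌊d / log d⌋` and
`B_d = ⌊d^{1/3}⌋`. By dominated convergence `d E[1 - e^{-λρt/(2d)}] → λ t E[ρ] / 2`, and since
`1 - e^{-u} ~ u`,
`B_d n_d (1 - e^{-s log d / d^{1/3}}) ~ d^{1/3} (d / log d) (s log d / d^{1/3}) = s d`;
hence `B_d n_d x_d → s λ t E[ρ] / 2`. As `B_d → ∞` this forces `n_d x_d → 0`, and then
`(1 - x)^n = 1 - n x + O((n x)^2)` (Bernoulli below, `(1 - x)^n ≤ e^{-n x}` above) shows that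
`B_d ((1 - x_d)^{n_d} - 1)` has the same limit as `-B_d n_d x_d`.
-/

open MeasureTheory Filter Real Asymptotics Topology

theorem tendsto_one_sub_exp_neg_mul_div (c : ℝ) :
    Tendsto (fun h => (1 - exp (-(h * c))) / h) (𝓝[≠] 0) (𝓝 c) := by
  have hderiv : HasDerivAt (fun h => 1 - exp (-(h * c))) c 0 := by
    simpa using ((hasDerivAt_mul_const (x := 0) c).neg.exp).const_sub 1
  refine (hasDerivAt_iff_tendsto_slope.mp hderiv).congr fun h => ?_
  simp [slope_def_field]

theorem tendsto_integral_one_sub_exp_neg_mul_div {Ω : Type*} [MeasurableSpace Ω]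
    {μ : Measure Ω} {ρ : Ω → ℝ} (hint : Integrable ρ μ) (hnn : 0 ≤ᵐ[μ] ρ) :
    Tendsto (fun h => (∫ ω, (1 - exp (-(h * ρ ω))) ∂μ) / h) (𝓝[>] 0) (𝓝 (∫ ω, ρ ω ∂μ)) := by
  simp_rw [← integral_div]
  refine tendsto_integral_filter_of_dominated_convergence ρ
    (Eventually.of_forall fun h => ?_) ?_ hint (Eventually.of_forall fun ω => ?_)
  · exact (by fun_prop : Continuous fun x => (1 - exp (-(h * x))) / h).comp_aestronglyMeasurable
      hint.1
  · filter_upwards [self_mem_nhdsWithin] with h (hh : 0 < h)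
    filter_upwards [hnn] with ω hω
    have hlo : 0 ≤ 1 - exp (-(h * ρ ω)) := by
      simpa using exp_le_one_iff.mpr (neg_nonpos.mpr (mul_nonneg hh.le hω))
    have hhi : 1 - exp (-(h * ρ ω)) ≤ h * ρ ω := by linarith [add_one_le_exp (-(h * ρ ω))]
    rw [norm_of_nonneg (div_nonneg hlo hh.le), div_le_iff₀ hh]
    linarith
  · exact (tendsto_one_sub_exp_neg_mul_div (ρ ω)).mono_left
      (nhdsWithin_mono 0 fun x hx => ne_of_gt hx)

theorem tendsto_natCast_mul_integral_one_sub_exp_neg_div {Ω : Type*} [MeasurableSpace Ω]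
    {μ : Measure Ω} {ρ : Ω → ℝ} (hint : Integrable ρ μ) (hnn : 0 ≤ᵐ[μ] ρ) {c : ℝ} (hc : 0 < c) :
    Tendsto (fun d : ℕ => d * ∫ ω, (1 - exp (-(c * ρ ω) / d)) ∂μ) atTop
      (𝓝 (c * ∫ ω, ρ ω ∂μ)) := by
  have hh : Tendsto (fun d : ℕ => c / d) atTop (𝓝[>] 0) :=
    tendsto_nhdsWithin_iff.mpr ⟨tendsto_const_nhds.div_atTop tendsto_natCast_atTop_atTop,
      eventually_gt_atTop 0 |>.mono fun d hd => div_pos hc (by exact_mod_cast hd)⟩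
  refine (((tendsto_integral_one_sub_exp_neg_mul_div hint hnn).comp hh).const_mul c).congr' ?_
  filter_upwards [eventually_gt_atTop 0] with d hd
  have hd : (0 : ℝ) < d := by exact_mod_cast hd
  simp only [Function.comp_apply]
  field_simp

theorem abs_one_sub_pow_sub_one_add_mul_le {x : ℝ} (hx : 0 ≤ x) {n : ℕ} (hnx : n * x ≤ 1) :
    |(1 - x) ^ n - 1 + n * x| ≤ (n * x) ^ 2 := by
  rcases n.eq_zero_or_pos with rfl | hn
  · simp
  have hx1 : x ≤ 1 := le_trans (le_mul_of_one_le_left hx (by exact_mod_cast hn)) hnx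
  have bernoulli : 1 + n * -x ≤ (1 + -x) ^ n := one_add_mul_le_pow (by linarith) n
  rw [← sub_eq_add_neg] at bernoulli
  have hexp : (1 - x) ^ n ≤ exp (-(n * x)) := by
    rw [← mul_neg, exp_nat_mul]
    exact pow_le_pow_left₀ (by linarith) (by linarith [add_one_le_exp (-x)]) n
  have htaylor := abs_exp_sub_one_sub_id_le (x := -(n * x))
    (by rw [abs_neg, abs_of_nonneg (by positivity)]; exact hnx)
  rw [abs_le] at htaylor ⊢
  constructor <;> nlinarith

theorem tendsto_mul_one_sub_pow_sub_one {ι : Type*} {l : Filter ι} {B x : ι → ℝ} {n : ι → ℕ}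
    {c : ℝ} (hB : Tendsto B l atTop) (hx : ∀ᶠ i in l, 0 ≤ x i)
    (h : Tendsto (fun i => B i * n i * x i) l (𝓝 c)) :
    Tendsto (fun i => B i * ((1 - x i) ^ n i - 1)) l (𝓝 (-c)) := by
  have hnx : Tendsto (fun i => n i * x i) l (𝓝 0) := by
    refine (h.div_atTop hB).congr' ?_
    filter_upwards [hB.eventually_gt_atTop 0] with i hi
    field_simp
  have herr : Tendsto (fun i => B i * ((1 - x i) ^ n i - 1 + n i * x i)) l (𝓝 0) := by
    refine squeeze_zero_norm' ?_ (by simpa using h.mul hnx)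
    filter_upwards [hB.eventually_ge_atTop 0, hx, hnx.eventually_le_const one_pos]
      with i hBi hxi hnxi
    rw [norm_mul, norm_of_nonneg hBi, Real.norm_eq_abs]
    calc B i * |(1 - x i) ^ n i - 1 + n i * x i| ≤ B i * (n i * x i) ^ 2 :=
          mul_le_mul_of_nonneg_left (abs_one_sub_pow_sub_one_add_mul_le hxi hnxi) hBi
      _ = B i * n i * x i * (n i * x i) := by ring
  simpa [mul_add, mul_assoc] using herr.sub h

theorem tendsto_div_log_atTop : Tendsto (fun x : ℝ => x / log x) atTop atTop := by
  have h : Tendsto (fun x : ℝ => log x / x) atTop (𝓝[>] 0) := by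
    refine tendsto_nhdsWithin_iff.mpr ⟨isLittleO_log_id_atTop.tendsto_div_nhds_zero, ?_⟩
    filter_upwards [eventually_gt_atTop 1] with x hx
    exact div_pos (log_pos hx) (by linarith)
  exact h.inv_tendsto_nhdsGT_zero.congr fun x => by simp only [Pi.inv_apply, inv_div]

theorem tendsto_floor_mul_floor_mul_one_sub_exp_mul {m : ℕ → ℝ} {s L : ℝ} (hs : s ≠ 0)
    (hm : Tendsto (fun d : ℕ => d * m d) atTop (𝓝 L)) :
    Tendsto (fun d : ℕ => (⌊(d : ℝ) ^ ((1 : ℝ) / 3)⌋₊ : ℝ) * ⌊(d : ℝ) / log d⌋₊ *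
      ((1 - exp (-(s * log d) / (d : ℝ) ^ ((1 : ℝ) / 3))) * m d)) atTop (𝓝 (s * L)) := by
  have hu : Tendsto (fun d : ℕ => s * log d / (d : ℝ) ^ ((1 : ℝ) / 3)) atTop (𝓝[≠] 0) := by
    refine tendsto_nhdsWithin_iff.mpr ⟨?_, ?_⟩
    · simpa [mul_div_assoc] using ((isLittleO_log_rpow_atTop (by norm_num : (0:ℝ) < 1 / 3)
        ).tendsto_div_nhds_zero.comp tendsto_natCast_atTop_atTop).const_mul s
    · filter_upwards [eventually_gt_atTop 1] with d hd
      have : 0 < log d := log_pos (by exact_mod_cast hd)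
      exact div_ne_zero (mul_ne_zero hs this.ne') (by positivity)
  have hB := isEquivalent_nat_floor.comp_tendsto
    ((tendsto_rpow_atTop (by norm_num : (0:ℝ) < 1 / 3)).comp tendsto_natCast_atTop_atTop)
  have hn := isEquivalent_nat_floor.comp_tendsto
    (tendsto_div_log_atTop.comp tendsto_natCast_atTop_atTop)
  have ha : (fun d : ℕ => 1 - exp (-(s * log d) / (d : ℝ) ^ ((1 : ℝ) / 3))) ~[atTop]
      fun d => s * log d / (d : ℝ) ^ ((1 : ℝ) / 3) := by
    refine isEquivalent_of_tendsto_one (((tendsto_one_sub_exp_neg_mul_div 1).comp hu).congr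
      fun d => ?_)
    simp [neg_div]
  have hBna : (fun d : ℕ => (⌊(d : ℝ) ^ ((1 : ℝ) / 3)⌋₊ : ℝ) * ⌊(d : ℝ) / log d⌋₊ *
      (1 - exp (-(s * log d) / (d : ℝ) ^ ((1 : ℝ) / 3)))) ~[atTop] fun d => s * d := by
    refine ((hB.mul hn).mul ha).congr_right ?_
    filter_upwards [eventually_gt_atTop 1] with d hd
    have : 0 < log d := log_pos (by exact_mod_cast hd)
    have : (0 : ℝ) < (d : ℝ) ^ ((1 : ℝ) / 3) := by positivity
    simp only [Pi.mul_apply, Function.comp_apply]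
    field_simp
  refine ((hBna.mul (IsEquivalent.refl (u := m))).symm.tendsto_nhds ?_).congr fun d => ?_
  · exact (hm.const_mul s).congr fun d => by simp only [Pi.mul_apply, mul_assoc]
  · simp only [Pi.mul_apply, mul_assoc]

theorem stmt7_general {Ω : Type*} [MeasurableSpace Ω] (μ : Measure Ω) [IsProbabilityMeasure μ]
    (Θ : ℝ) (ρ : Ω → ℝ) (hρmeas : Measurable ρ)
    (hbd : ∀ᵐ ω ∂μ, ρ ω ∈ Set.Icc 0 Θ)
    (lam t s : ℝ) (hlam : 0 < lam) (ht : 0 < t) (hs : 0 < s) :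
    Tendsto (fun d : ℕ =>
        (⌊(d : ℝ) ^ ((1 : ℝ) / 3)⌋₊ : ℝ) *
          ((1 - (1 - Real.exp (-(s * Real.log d) / (d : ℝ) ^ ((1 : ℝ) / 3))) *
              ∫ ω, (1 - Real.exp (-(lam * ρ ω * t) / (2 * d))) ∂μ) ^
            ⌊(d : ℝ) / Real.log d⌋₊ - 1))
      atTop (nhds (-(s * lam * t * ∫ ω, ρ ω ∂μ) / 2)) := by
  have hnn : 0 ≤ᵐ[μ] ρ := hbd.mono fun ω h => h.1
  have hint : Integrable ρ μ := Integrable.of_bound hρmeas.aestronglyMeasurable Θ <|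
    hbd.mono fun ω h => by rw [norm_of_nonneg h.1]; exact h.2
  have hm : Tendsto (fun d : ℕ => d * ∫ ω, (1 - exp (-(lam * ρ ω * t) / (2 * d))) ∂μ) atTop
      (𝓝 (lam * t / 2 * ∫ ω, ρ ω ∂μ)) :=
    (tendsto_natCast_mul_integral_one_sub_exp_neg_div hint hnn (by positivity)).congr
      fun d => by field_simp
  have hx : ∀ᶠ d : ℕ in atTop, 0 ≤ (1 - exp (-(s * log d) / (d : ℝ) ^ ((1 : ℝ) / 3))) *
      ∫ ω, (1 - exp (-(lam * ρ ω * t) / (2 * d))) ∂μ := by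
    filter_upwards [eventually_ge_atTop 1] with d hd
    have hlog : 0 ≤ log d := log_nonneg (by exact_mod_cast hd)
    refine mul_nonneg ?_ (integral_nonneg_of_ae ?_)
    · exact sub_nonneg.mpr <| exp_le_one_iff.mpr <|
        div_nonpos_of_nonpos_of_nonneg (by nlinarith) (by positivity)
    · filter_upwards [hnn] with ω hω
      exact sub_nonneg.mpr <| exp_le_one_iff.mpr <| div_nonpos_of_nonpos_of_nonneg
        (neg_nonpos.mpr (mul_nonneg (mul_nonneg hlam.le hω) ht.le)) (by positivity)
  have hB : Tendsto (fun d : ℕ => (⌊(d : ℝ) ^ ((1 : ℝ) / 3)⌋₊ : ℝ)) atTop atTop :=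
    tendsto_natCast_atTop_atTop.comp <| tendsto_nat_floor_atTop.comp <|
      (tendsto_rpow_atTop (by norm_num)).comp tendsto_natCast_atTop_atTop
  have hlim := tendsto_mul_one_sub_pow_sub_one hB hx
    (tendsto_floor_mul_floor_mul_one_sub_exp_mul hs.ne' hm)
  rwa [show -(s * (lam * t / 2 * ∫ ω, ρ ω ∂μ)) = -(s * lam * t * ∫ ω, ρ ω ∂μ) / 2 by ring]
    at hlim

/-- The key Laplace-transform limit (Equation (42.5) of the paper):
`⌊d^{1/3}⌋ ((1 - (1 - e^{-s log d / d^{1/3}}) E[1 - e^{-λρt/(2d)}])^{⌊d/log d⌋} - 1)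
  → -(s λ t E ρ)/2`. -/
theorem stmt7 {Ω : Type*} [MeasurableSpace Ω] (μ : Measure Ω) [IsProbabilityMeasure μ]
    (Θ : ℝ) (hΘ : 0 < Θ) (ρ : Ω → ℝ) (hρmeas : Measurable ρ)
    (hbd : ∀ᵐ ω ∂μ, ρ ω ∈ Set.Icc 0 Θ) (hEpos : 0 < ∫ ω, ρ ω ∂μ)
    (lam t s : ℝ) (hlam : 0 < lam) (ht : 0 < t) (hs : 0 < s) :
    Tendsto (fun d : ℕ =>
        (⌊(d : ℝ) ^ ((1 : ℝ) / 3)⌋₊ : ℝ) *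
          ((1 - (1 - Real.exp (-(s * Real.log d) / (d : ℝ) ^ ((1 : ℝ) / 3))) *
              ∫ ω, (1 - Real.exp (-(lam * ρ ω * t) / (2 * d))) ∂μ) ^
            ⌊(d : ℝ) / Real.log d⌋₊ - 1))
      atTop (nhds (-(s * lam * t * ∫ ω, ρ ω ∂μ) / 2)) :=
  stmt7_general μ Θ ρ hρmeas hbd lam t s hlam ht hs
end
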